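/- Let γ and γ⊥ be orthonormal vectors in ℂ², let θ, α ∈ ℝ with ω := α − θ satisfying e^{iω} ≠ −1 and e^{iω} ≠ 1, and set φ = (γ + e^{iθ}γ⊥)/√2 and ψ = (γ + e^{iα}γ⊥)/√2. Let I be the 2×2 identity matrix and P_{φ,ψ} := (1/2)(|φ⟩⟨φ| + |ψ⟩⟨ψ| − I). Then for all real numbers s, t, a, the weak value W_{φ,ψ}(s·P_{φ,ψ} + t·(|φ⟩⟨φ| − |ψ⟩⟨ψ|) + a·(|γ⟩⟨γ| − I/2)) equals (1/2)(s + i·a·tan(ω/2)). -/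

import Mathlib

noncomputable section

/-- The rank-one projector `|v⟩⟨v|` with entries `v i * conj (v j)`. -/
def proj (v : EuclideanSpace ℂ (Fin 2)) : Matrix (Fin 2) (Fin 2) ℂ :=
  Matrix.of fun i j => v i * star (v j)

/-- Matrix-vector multiplication, valued in `EuclideanSpace ℂ (Fin 2)`. -/
def mulVecE (M : Matrix (Fin 2) (Fin 2) ℂ) (v : EuclideanSpace ℂ (Fin 2)) :
    EuclideanSpace ℂ (Fin 2) :=
  (WithLp.equiv 2 (Fin 2 → ℂ)).symm (M.mulVec ((WithLp.equiv 2 (Fin 2 → ℂ)) v))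

/-- The weak value `W_{φ,ψ}(M) = ⟨ψ, Mφ⟩ / ⟨ψ, φ⟩`. -/
def weak (φ ψ : EuclideanSpace ℂ (Fin 2)) (M : Matrix (Fin 2) (Fin 2) ℂ) : ℂ :=
  (inner ℂ ψ (mulVecE M φ) : ℂ) / (inner ℂ ψ φ : ℂ)

/-! The weak value is linear in the observable, and for unit vectors `φ, ψ` it sends `|φ⟩⟨φ|`,
`|ψ⟩⟨ψ|` and `I` to `1`; so `P` contributes `s/2` and `|φ⟩⟨φ| - |ψ⟩⟨ψ|` nothing. What remains is
`W(|γ⟩⟨γ|) = ⟨ψ,γ⟩⟨γ,φ⟩ / ⟨ψ,φ⟩ = 1 / (1 + e^{-iω})`, and the half-angle factorisation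
`1 + e^{-iω} = 2 cos(ω/2) e^{-iω/2}` turns `1 / (1 + e^{-iω}) - 1/2` into `(i/2) tan(ω/2)`. -/

open Complex ComplexConjugate

lemma mulVecE_add (A B : Matrix (Fin 2) (Fin 2) ℂ) (v : EuclideanSpace ℂ (Fin 2)) :
    mulVecE (A + B) v = mulVecE A v + mulVecE B v := by
  simp only [mulVecE, Matrix.add_mulVec, WithLp.equiv_symm_apply, WithLp.toLp_add]

lemma mulVecE_sub (A B : Matrix (Fin 2) (Fin 2) ℂ) (v : EuclideanSpace ℂ (Fin 2)) :
    mulVecE (A - B) v = mulVecE A v - mulVecE B v := by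
  simp only [mulVecE, Matrix.sub_mulVec, WithLp.equiv_symm_apply, WithLp.toLp_sub]

lemma mulVecE_smul (c : ℂ) (A : Matrix (Fin 2) (Fin 2) ℂ) (v : EuclideanSpace ℂ (Fin 2)) :
    mulVecE (c • A) v = c • mulVecE A v := by
  simp only [mulVecE, Matrix.smul_mulVec, WithLp.equiv_symm_apply, WithLp.toLp_smul]

lemma mulVecE_one (v : EuclideanSpace ℂ (Fin 2)) : mulVecE 1 v = v := by
  simp [mulVecE]

lemma mulVecE_proj (v w : EuclideanSpace ℂ (Fin 2)) :
    mulVecE (proj v) w = inner ℂ v w • v := by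
  ext i
  simp only [mulVecE, proj, Matrix.mulVec, dotProduct, PiLp.inner_apply, Finset.sum_mul,
    Matrix.of_apply, WithLp.equiv_apply, WithLp.equiv_symm_apply, PiLp.smul_apply, smul_eq_mul,
    RCLike.inner_apply, Complex.star_def]
  exact Finset.sum_congr rfl fun j _ => by ring

section WeakValue

variable (φ ψ : EuclideanSpace ℂ (Fin 2))

lemma weak_add (A B : Matrix (Fin 2) (Fin 2) ℂ) :
    weak φ ψ (A + B) = weak φ ψ A + weak φ ψ B := by
  simp only [weak, mulVecE_add, inner_add_right, add_div]

lemma weak_sub (A B : Matrix (Fin 2) (Fin 2) ℂ) :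
    weak φ ψ (A - B) = weak φ ψ A - weak φ ψ B := by
  simp only [weak, mulVecE_sub, inner_sub_right, sub_div]

lemma weak_smul (c : ℂ) (A : Matrix (Fin 2) (Fin 2) ℂ) :
    weak φ ψ (c • A) = c * weak φ ψ A := by
  simp only [weak, mulVecE_smul, inner_smul_right, mul_div_assoc]

lemma weak_one {φ ψ : EuclideanSpace ℂ (Fin 2)} (h : inner ℂ ψ φ ≠ 0) : weak φ ψ 1 = 1 := by
  rw [weak, mulVecE_one, div_self h]

lemma weak_proj (v : EuclideanSpace ℂ (Fin 2)) :
    weak φ ψ (proj v) = inner ℂ ψ v * inner ℂ v φ / inner ℂ ψ φ := by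
  rw [weak, mulVecE_proj, inner_smul_right, mul_comm]

lemma weak_proj_left {φ ψ : EuclideanSpace ℂ (Fin 2)} (hφ : ‖φ‖ = 1) (h : inner ℂ ψ φ ≠ 0) :
    weak φ ψ (proj φ) = 1 := by
  rw [weak_proj, inner_self_eq_one_of_norm_eq_one hφ, mul_one, div_self h]

lemma weak_proj_right {φ ψ : EuclideanSpace ℂ (Fin 2)} (hψ : ‖ψ‖ = 1) (h : inner ℂ ψ φ ≠ 0) :
    weak φ ψ (proj ψ) = 1 := by
  rw [weak_proj, inner_self_eq_one_of_norm_eq_one hψ, one_mul, div_self h]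

end WeakValue

section EqualSuperposition

variable {E : Type*} [NormedAddCommGroup E] [InnerProductSpace ℂ E] {γ γperp : E}

def equalSuperposition (γ γperp : E) (θ : ℝ) : E :=
  (Real.sqrt 2 : ℂ)⁻¹ • (γ + exp (θ * I) • γperp)

lemma inner_add_smul_add_smul (hγ : ‖γ‖ = 1) (hγp : ‖γperp‖ = 1) (horth : inner ℂ γ γperp = 0)
    (c d : ℂ) : inner ℂ (γ + c • γperp) (γ + d • γperp) = 1 + conj c * d := by
  have horth' : inner ℂ γperp γ = (0 : ℂ) := inner_eq_zero_symm.mp horth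
  simp only [inner_add_left, inner_add_right, inner_smul_left, inner_smul_right,
    inner_self_eq_one_of_norm_eq_one hγ, inner_self_eq_one_of_norm_eq_one hγp, horth, horth']
  ring

lemma conj_exp_mul_I_mul_exp_mul_I (α θ : ℝ) :
    conj (exp (α * I)) * exp (θ * I) = exp (-((α - θ : ℝ) : ℂ) * I) := by
  rw [← exp_conj, ← exp_add, map_mul, conj_ofReal, conj_I]
  push_cast
  ring_nf

lemma conj_inv_sqrt_two_mul_inv_sqrt_two :
    conj ((Real.sqrt 2 : ℂ)⁻¹) * (Real.sqrt 2 : ℂ)⁻¹ = 1 / 2 := by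
  rw [map_inv₀, conj_ofReal, ← mul_inv, ← ofReal_mul, Real.mul_self_sqrt zero_le_two]
  norm_num

lemma inner_equalSuperposition (hγ : ‖γ‖ = 1) (hγp : ‖γperp‖ = 1) (horth : inner ℂ γ γperp = 0)
    (α θ : ℝ) :
    inner ℂ (equalSuperposition γ γperp α) (equalSuperposition γ γperp θ)
      = (1 + exp (-((α - θ : ℝ) : ℂ) * I)) / 2 := by
  rw [equalSuperposition, equalSuperposition, inner_smul_left, inner_smul_right,
    inner_add_smul_add_smul hγ hγp horth, conj_exp_mul_I_mul_exp_mul_I, ← mul_assoc,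
    conj_inv_sqrt_two_mul_inv_sqrt_two]
  ring

lemma norm_equalSuperposition (hγ : ‖γ‖ = 1) (hγp : ‖γperp‖ = 1) (horth : inner ℂ γ γperp = 0)
    (θ : ℝ) : ‖equalSuperposition γ γperp θ‖ = 1 := by
  rw [norm_eq_sqrt_re_inner (𝕜 := ℂ), inner_equalSuperposition hγ hγp horth]
  norm_num

lemma inner_equalSuperposition_base_mul_inner_base_equalSuperposition (hγ : ‖γ‖ = 1)
    (horth : inner ℂ γ γperp = 0) (α θ : ℝ) :
    inner ℂ (equalSuperposition γ γperp α) γ * inner ℂ γ (equalSuperposition γ γperp θ)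
      = 1 / 2 := by
  have horth' : inner ℂ γperp γ = (0 : ℂ) := inner_eq_zero_symm.mp horth
  simp only [equalSuperposition, inner_smul_left, inner_smul_right, inner_add_left,
    inner_add_right, inner_self_eq_one_of_norm_eq_one hγ, horth, horth']
  rw [← conj_inv_sqrt_two_mul_inv_sqrt_two]
  ring

end EqualSuperposition

lemma one_add_exp_neg_mul_I_ne_zero {ω : ℝ} (h : exp (ω * I) ≠ -1) : 1 + exp (-ω * I) ≠ 0 := by
  intro h'
  have hmul : exp (ω * I) * exp (-ω * I) = 1 := by rw [← exp_add]; simp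
  exact h (by linear_combination exp (ω * I) * h' - hmul)

lemma inv_one_add_exp_neg_mul_I {ω : ℝ} (h : exp (ω * I) ≠ -1) :
    (1 + exp (-ω * I))⁻¹ = (1 + I * Real.tan (ω / 2)) / 2 := by
  set x : ℝ := ω / 2
  have hω : (ω : ℂ) = 2 * x := by push_cast [x]; ring
  have hfactor : 1 + exp (-ω * I) = 2 * cos x * (cos x - sin x * I) := by
    have hexp : exp (-x * I) = cos x - sin x * I := by
      rw [exp_mul_I, cos_neg, sin_neg]
      ring
    rw [hω, show -(2 * (x : ℂ)) * I = -x * I + -x * I by ring, exp_add, hexp]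
    linear_combination -sin_sq_add_cos_sq (x : ℂ) + sin (x : ℂ) ^ 2 * I_sq
  have hne := one_add_exp_neg_mul_I_ne_zero h
  rw [hfactor] at hne
  have hcos : cos (x : ℂ) ≠ 0 := right_ne_zero_of_mul (left_ne_zero_of_mul hne)
  have hconj : cos (x : ℂ) - sin x * I ≠ 0 := right_ne_zero_of_mul hne
  rw [hfactor, ofReal_tan, tan_eq_sin_div_cos]
  field_simp
  linear_combination -sin_sq_add_cos_sq (x : ℂ) + sin (x : ℂ) ^ 2 * I_sq

theorem stmt6_general (γ γperp : EuclideanSpace ℂ (Fin 2))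
    (hγ : ‖γ‖ = 1) (hγp : ‖γperp‖ = 1) (horth : (inner ℂ γ γperp : ℂ) = 0)
    (θ α : ℝ) (ω : ℝ) (hω : ω = α - θ)
    (hnon : Complex.exp (ω * Complex.I) ≠ -1)
    (φ ψ : EuclideanSpace ℂ (Fin 2))
    (hφ : φ = (Real.sqrt 2 : ℂ)⁻¹ • (γ + Complex.exp (θ * Complex.I) • γperp))
    (hψ : ψ = (Real.sqrt 2 : ℂ)⁻¹ • (γ + Complex.exp (α * Complex.I) • γperp))
    (P : Matrix (Fin 2) (Fin 2) ℂ)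
    (hP : P = (1 / 2 : ℂ) • (proj φ + proj ψ - (1 : Matrix (Fin 2) (Fin 2) ℂ)))
    (s t a : ℝ) :
    weak φ ψ ((s : ℂ) • P + (t : ℂ) • (proj φ - proj ψ)
        + (a : ℂ) • (proj γ - (1 / 2 : ℂ) • (1 : Matrix (Fin 2) (Fin 2) ℂ)))
      = (1 / 2) * ((s : ℂ) + Complex.I * (a : ℂ) * (Real.tan (ω / 2) : ℂ)) := by
  change φ = equalSuperposition γ γperp θ at hφ
  change ψ = equalSuperposition γ γperp α at hψ
  have hψφ : inner ℂ ψ φ = (1 + exp (-ω * I)) / 2 := by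
    rw [hφ, hψ, hω, inner_equalSuperposition hγ hγp horth]
  have hψφ_ne : inner ℂ ψ φ ≠ 0 := by
    rw [hψφ]
    exact div_ne_zero (one_add_exp_neg_mul_I_ne_zero hnon) two_ne_zero
  have hφ_norm : ‖φ‖ = 1 := hφ ▸ norm_equalSuperposition hγ hγp horth θ
  have hψ_norm : ‖ψ‖ = 1 := hψ ▸ norm_equalSuperposition hγ hγp horth α
  have hγ_weak : weak φ ψ (proj γ) = (1 + I * Real.tan (ω / 2)) / 2 := by
    rw [weak_proj, hψφ, hφ, hψ,
      inner_equalSuperposition_base_mul_inner_base_equalSuperposition hγ horth,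
      ← inv_one_add_exp_neg_mul_I hnon]
    field_simp
  rw [hP]
  simp only [weak_add, weak_sub, weak_smul, weak_one hψφ_ne, weak_proj_left hφ_norm hψφ_ne,
    weak_proj_right hψ_norm hψφ_ne, hγ_weak]
  ring

/-- full geometric decomposition of the weak value:
`W_{φ,ψ}(s P + t(|φ⟩⟨φ| - |ψ⟩⟨ψ|) + a(|γ⟩⟨γ| - I/2)) = (1/2)(s + i a tan(ω/2))`. -/
theorem stmt6 (γ γperp : EuclideanSpace ℂ (Fin 2))
    (hγ : ‖γ‖ = 1) (hγp : ‖γperp‖ = 1) (horth : (inner ℂ γ γperp : ℂ) = 0)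
    (θ α : ℝ) (ω : ℝ) (hω : ω = α - θ)
    (hnon : Complex.exp (ω * Complex.I) ≠ -1)
    (hne : Complex.exp (ω * Complex.I) ≠ 1)
    (φ ψ : EuclideanSpace ℂ (Fin 2))
    (hφ : φ = (Real.sqrt 2 : ℂ)⁻¹ • (γ + Complex.exp (θ * Complex.I) • γperp))
    (hψ : ψ = (Real.sqrt 2 : ℂ)⁻¹ • (γ + Complex.exp (α * Complex.I) • γperp))
    (P : Matrix (Fin 2) (Fin 2) ℂ)
    (hP : P = (1 / 2 : ℂ) • (proj φ + proj ψ - (1 : Matrix (Fin 2) (Fin 2) ℂ)))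
    (s t a : ℝ) :
    weak φ ψ ((s : ℂ) • P + (t : ℂ) • (proj φ - proj ψ)
        + (a : ℂ) • (proj γ - (1 / 2 : ℂ) • (1 : Matrix (Fin 2) (Fin 2) ℂ)))
      = (1 / 2) * ((s : ℂ) + Complex.I * (a : ℂ) * (Real.tan (ω / 2) : ℂ)) :=
  stmt6_general γ γperp hγ hγp horth θ α ω hω hnon φ ψ hφ hψ P hP s t a
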